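/- For natural numbers t and k with k ≥ 2, the number of natural numbers n < 2^t such that the Catalan number Cₙ is congruent to 2^{k−1} modulo 2^k equals the binomial coefficient binomial(t, k). -/
import Mathlib

open Nat Finset

lemma dsum_rec (m : ℕ) (hm : 0 < m) :
    (Nat.digits 2 m).sum = m % 2 + (Nat.digits 2 (m / 2)).sum := by
  rw [Nat.digits_def' (by norm_num) hm]; simp

lemma dsum_two_mul (m : ℕ) : (Nat.digits 2 (2 * m)).sum = (Nat.digits 2 m).sum := by
  rcases Nat.eq_zero_or_pos m with rfl | hm
  · simp
  · rw [dsum_rec (2*m) (by omega)]; simp [Nat.mul_div_cancel_left, Nat.mul_mod_right]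

lemma dsum_succ_le (m : ℕ) : (Nat.digits 2 (m + 1)).sum ≤ (Nat.digits 2 m).sum + 1 := by
  induction m using Nat.strong_induction_on with
  | _ m ih =>
    rcases Nat.eq_zero_or_pos m with rfl | hm
    · simp
    rcases Nat.even_or_odd m with ⟨a, rfl⟩ | ⟨a, rfl⟩
    · rw [dsum_rec (a + a + 1) (by omega), dsum_rec (a + a) (by omega),
        show (a + a + 1) / 2 = a by omega, show (a + a) / 2 = a by omega]
      omega
    · rw [dsum_rec (2 * a + 1 + 1) (by omega), dsum_rec (2 * a + 1) (by omega),
        show (2 * a + 1 + 1) / 2 = a + 1 by omega, show (2 * a + 1) / 2 = a by omega]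
      have := ih a (by omega)
      omega

-- valuation of n+1
lemma val_succ (n : ℕ) :
    padicValNat 2 (n + 1) + (Nat.digits 2 (n + 1)).sum = (Nat.digits 2 n).sum + 1 := by
  have h := @sub_one_mul_padicValNat_choose_eq_sub_sum_digits' 2 1 n ⟨Nat.prime_two⟩
  simp only [Nat.choose_one_right, Nat.sub_self] at h
  rw [show Nat.digits 2 1 = [1] from by simp] at h
  simp only [List.sum_cons, List.sum_nil] at h
  simp only [show (2:ℕ) - 1 = 1 from rfl, one_mul] at h
  have hle := dsum_succ_le n
  omega

-- valuation of central binomial coefficient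
lemma val_centralBinom (n : ℕ) :
    padicValNat 2 n.centralBinom = (Nat.digits 2 n).sum := by
  have h := @sub_one_mul_padicValNat_choose_eq_sub_sum_digits' 2 n n ⟨Nat.prime_two⟩
  rw [show n + n = 2 * n by ring, ← Nat.centralBinom] at h
  rw [dsum_two_mul] at h
  omega

lemma val_catalan (n : ℕ) :
    padicValNat 2 (catalan n) + 1 = (Nat.digits 2 (n + 1)).sum := by
  have h := succ_mul_catalan_eq_centralBinom n
  have hv : padicValNat 2 (n + 1) + padicValNat 2 (catalan n)
      = padicValNat 2 n.centralBinom := by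
    rw [← h, padicValNat.mul (by omega) (by
      have := n.centralBinom_pos
      intro h0; rw [h0, mul_zero] at h; omega)]
  have h1 := val_succ n
  have h2 := val_centralBinom n
  omega

lemma modeq_iff_val (m j : ℕ) (hm : m ≠ 0) :
    m ≡ 2 ^ j [MOD 2 ^ (j + 1)] ↔ padicValNat 2 m = j := by
  have key : ∀ q : ℕ, padicValNat 2 (2 ^ j * (2 * q + 1)) = j := by
    intro q
    rw [padicValNat.mul (by positivity) (by omega), padicValNat.prime_pow,
      padicValNat.eq_zero_of_not_dvd (by omega), add_zero]
  constructor
  · intro h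
    have h1 : m % 2 ^ (j + 1) = 2 ^ j := by
      rw [Nat.ModEq] at h
      rw [h, Nat.mod_eq_of_lt (by exact Nat.pow_lt_pow_right one_lt_two (by omega))]
    have h2 : m = 2 ^ j * (2 * (m / 2 ^ (j + 1)) + 1) := by
      have := Nat.div_add_mod m (2 ^ (j + 1))
      rw [h1] at this
      rw [mul_add, mul_one, ← mul_assoc, show 2 ^ j * 2 = 2 ^ (j + 1) by ring]
      omega
    rw [h2, key]
  · intro h
    have hd : 2 ^ j ∣ m := h ▸ pow_padicValNat_dvd
    obtain ⟨u, rfl⟩ := hd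
    have hu : ¬ 2 ∣ u := by
      rintro ⟨v, rfl⟩
      have h2 := @pow_succ_padicValNat_not_dvd 2 _ ⟨Nat.prime_two⟩ hm
      rw [h] at h2
      exact h2 ⟨v, by ring⟩
    obtain ⟨q, rfl⟩ : ∃ q, u = 2 * q + 1 := ⟨u / 2, by omega⟩
    show (2 ^ j * (2 * q + 1)) % _ = _
    rw [mul_add, mul_one, ← mul_assoc, show 2 ^ j * 2 = 2 ^ (j + 1) by ring,
      Nat.mul_add_mod, Nat.mod_eq_of_lt (Nat.pow_lt_pow_right one_lt_two (by omega))]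

lemma dsum_eq_length (m : ℕ) : (Nat.digits 2 m).sum = m.bitIndices.length := by
  induction m using Nat.strong_induction_on with
  | _ m ih =>
    rcases Nat.eq_zero_or_pos m with rfl | hm
    · simp
    rcases Nat.even_or_odd m with ⟨a, rfl⟩ | ⟨a, rfl⟩
    · rw [show a + a = 2 * a by ring] at *
      rw [Nat.bitIndices_two_mul, dsum_two_mul, List.length_map, ih a (by omega)]
    · rw [Nat.bitIndices_two_mul_add_one, dsum_rec _ (by omega),
        show (2 * a + 1) % 2 = 1 by omega, show (2 * a + 1) / 2 = a by omega,
        ih a (by omega)]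
      simp [add_comm]

lemma sum_two_pow (t : ℕ) : ∑ i ∈ Finset.range t, 2 ^ i = 2 ^ t - 1 := by
  induction t with
  | zero => simp
  | succ t ih =>
    rw [Finset.sum_range_succ, ih]
    have : 1 ≤ 2 ^ t := Nat.one_le_two_pow
    rw [pow_succ]
    omega

lemma count_dsum (t k : ℕ) :
    ((Finset.range (2 ^ t)).filter (fun m => (Nat.digits 2 m).sum = k)).card
      = t.choose k := by
  have := Finset.card_powersetCard k (Finset.range t)
  rw [Finset.card_range] at this
  rw [← this]
  refine Finset.card_bij' (fun m _ => m.bitIndices.toFinset) (fun S _ => ∑ i ∈ S, 2 ^ i) ?_ ?_ ?_ ?_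
  · intro m hm
    simp only [Finset.mem_filter, Finset.mem_range] at hm
    simp only [Finset.mem_powersetCard]
    constructor
    · intro a ha
      rw [List.mem_toFinset] at ha
      rw [Finset.mem_range]
      have h2 := Nat.two_pow_le_of_mem_bitIndices ha
      by_contra h
      have : 2 ^ t ≤ 2 ^ a := Nat.pow_le_pow_right (by norm_num) (by omega)
      omega
    · rw [List.toFinset_card_of_nodup Nat.bitIndices_sorted.nodup, ← dsum_eq_length]
      exact hm.2
  · intro S hS
    simp only [Finset.mem_powersetCard, Finset.mem_coe] at hS
    simp only [Finset.mem_filter, Finset.mem_range]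
    constructor
    · calc ∑ i ∈ S, 2 ^ i ≤ ∑ i ∈ Finset.range t, 2 ^ i :=
            Finset.sum_le_sum_of_subset hS.1
        _ = 2 ^ t - 1 := sum_two_pow t
        _ < 2 ^ t := by have : 1 ≤ 2 ^ t := Nat.one_le_two_pow; omega
    · rw [dsum_eq_length, ← List.toFinset_card_of_nodup Nat.bitIndices_sorted.nodup,
        Finset.toFinset_bitIndices_twoPowSum S, hS.2]
  · intro m _; exact Finset.twoPowSum_toFinset_bitIndices m
  · intro S _; exact Finset.toFinset_bitIndices_twoPowSum S

lemma catalan_ne_zero (n : ℕ) : catalan n ≠ 0 := by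
  have h := succ_mul_catalan_eq_centralBinom n
  have := n.centralBinom_pos
  intro h0; rw [h0, mul_zero] at h; omega

lemma dsum_two_pow (t : ℕ) : (Nat.digits 2 (2 ^ t)).sum = 1 := by
  rw [dsum_eq_length, Nat.bitIndices_two_pow]; rfl

/-- `#{n < 2^t : Cₙ ≡ 2^{k−1} (mod 2^k)} = C(t, k)` for `k ≥ 2`. -/
theorem card_catalan_modEq_half (t k : ℕ) (hk : 2 ≤ k) :
    {n : ℕ | n < 2 ^ t ∧ catalan n ≡ 2 ^ (k - 1) [MOD 2 ^ k]}.ncard = t.choose k := by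
  obtain ⟨j, rfl⟩ : ∃ j, k = j + 1 := ⟨k - 1, by omega⟩
  have hj : 1 ≤ j := by omega
  have hset : {n : ℕ | n < 2 ^ t ∧ catalan n ≡ 2 ^ (j + 1 - 1) [MOD 2 ^ (j + 1)]}
      = ↑((Finset.range (2 ^ t)).filter
          (fun n => (Nat.digits 2 (n + 1)).sum = j + 1)) := by
    ext n
    simp only [Set.mem_setOf_eq, Finset.coe_filter, Finset.mem_range]
    refine and_congr_right fun _ => ?_
    rw [show j + 1 - 1 = j from rfl, modeq_iff_val _ _ (catalan_ne_zero n)]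
    have := val_catalan n
    omega
  rw [hset, Set.ncard_coe_finset]
  rw [show ((Finset.range (2 ^ t)).filter
        (fun n => (Nat.digits 2 (n + 1)).sum = j + 1)).card
      = ((Finset.range (2 ^ t)).filter
        (fun m => (Nat.digits 2 m).sum = j + 1)).card from ?_, count_dsum]
  refine Finset.card_bij (fun n _ => n + 1) ?_ ?_ ?_
  · intro n hn
    simp only [Finset.mem_filter, Finset.mem_range] at hn ⊢
    refine ⟨?_, hn.2⟩
    rcases Nat.lt_or_ge (n + 1) (2 ^ t) with h | h
    · exact h
    · exfalso
      have he : n + 1 = 2 ^ t := by omega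
      rw [he, dsum_two_pow] at hn
      omega
  · intro a _ b _ h
    have : a + 1 = b + 1 := h
    omega
  · intro m hm
    simp only [Finset.mem_filter, Finset.mem_range] at hm
    have hm0 : m ≠ 0 := by
      intro h0; rw [h0] at hm; simp at hm
    refine ⟨m - 1, ?_, show m - 1 + 1 = m by omega⟩
    simp only [Finset.mem_filter, Finset.mem_range]
    rw [show m - 1 + 1 = m by omega]
    exact ⟨by omega, hm.2⟩
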